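/- Let G(t) = (t² − 2a² t cos 2φ + a⁴)(t² − 2b² t cos 2φ + b⁴) with 0 < a < b and π/4 < φ < π/2, and define H(s) = s² − 2(a²+b²) s cos 2φ + a⁴ + b⁴ + 2a²b² cos 4φ. Then for all t ≠ 0, with s = t + a²b²/t, one has the identity ((t ± ab)/t²)² · t G(t) = (s ± 2ab) H(s). -/
import Mathlib


open Complex

/-- The polynomial defining the genus-2 curve (without the factor t). -/
noncomputable def Gpoly (a b φ : ℝ) (t : ℂ) : ℂ :=
  (t ^ 2 - 2 * (a : ℂ) ^ 2 * t * Real.cos (2 * φ) + (a : ℂ) ^ 4) *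
  (t ^ 2 - 2 * (b : ℂ) ^ 2 * t * Real.cos (2 * φ) + (b : ℂ) ^ 4)

/-- The quadratic factor of the elliptic curves Γ±. -/
noncomputable def Hpoly (a b φ : ℝ) (s : ℂ) : ℂ :=
  s ^ 2 - 2 * ((a : ℂ) ^ 2 + (b : ℂ) ^ 2) * s * Real.cos (2 * φ)
    + (a : ℂ) ^ 4 + (b : ℂ) ^ 4 + 2 * (a : ℂ) ^ 2 * (b : ℂ) ^ 2 * Real.cos (4 * φ)

theorem genus2_covers_elliptic
    (a b φ : ℝ) (ha : 0 < a) (hab : a < b)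
    (hφ₁ : Real.pi / 4 < φ) (hφ₂ : φ < Real.pi / 2) :
    ∀ t : ℂ, t ≠ 0 →
      let s := t + (a : ℂ) ^ 2 * (b : ℂ) ^ 2 / t
      ((t + (a : ℂ) * b) ^ 2 / t ^ 4) * (t * Gpoly a b φ t) =
        (s + 2 * (a : ℂ) * b) * Hpoly a b φ s ∧
      ((t - (a : ℂ) * b) ^ 2 / t ^ 4) * (t * Gpoly a b φ t) =
        (s - 2 * (a : ℂ) * b) * Hpoly a b φ s := by
  intro t ht
  have h4 : Real.cos (4 * φ) = 2 * Real.cos (2 * φ) ^ 2 - 1 := by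
    rw [show (4 * φ) = 2 * (2 * φ) by ring, Real.cos_two_mul]
  simp only [Gpoly, Hpoly, h4]
  push_cast
  constructor <;> (field_simp; ring)
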